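/- The action of Q_{2n} on V = ℂ^{2n} defined by (x_i, e_1) = x_{i+1} for 2 ≤ i ≤ 2n-2, (x_1, e_i) = (-1)^i x_i for 2 ≤ i ≤ 2n-1, (x_{2n+1-i}, e_i) = x_{2n} for 2 ≤ i ≤ 2n-1, (x_1, e_{2n}) = -2x_{2n}, and all other products zero, makes V a right Q_{2n}-module. -/
import Mathlib


/-- Bilinear extension to `Fin N → ℂ` of a bracket given by structure constants
`c i j k` (1-based indices): the coefficient of `e_k` in `[e_i, e_j]`. -/
noncomputable def bilinBracket (N : ℕ) (c : ℕ → ℕ → ℕ → ℂ) (f g : Fin N → ℂ) : Fin N → ℂ :=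
  fun k => ∑ i : Fin N, ∑ j : Fin N,
    f i * g j * c ((i : ℕ) + 1) ((j : ℕ) + 1) ((k : ℕ) + 1)
/-- Structure constants of the filiform Lie algebra `Q_{2n}`:
`[e_1,e_i] = -[e_i,e_1] = e_{i+1}` for `2 ≤ i ≤ 2n-2` and
`[e_{2n+1-i},e_i] = -[e_i,e_{2n+1-i}] = (-1)^i e_{2n}` for `2 ≤ i ≤ n`. -/
noncomputable def cQ (n i j k : ℕ) : ℂ :=
  (if i = 1 ∧ 2 ≤ j ∧ j ≤ 2 * n - 2 ∧ k = j + 1 then 1 else 0)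
  - (if j = 1 ∧ 2 ≤ i ∧ i ≤ 2 * n - 2 ∧ k = i + 1 then 1 else 0)
  + (if 2 ≤ j ∧ j ≤ n ∧ i = 2 * n + 1 - j ∧ k = 2 * n then (-1 : ℂ) ^ j else 0)
  - (if 2 ≤ i ∧ i ≤ n ∧ j = 2 * n + 1 - i ∧ k = 2 * n then (-1 : ℂ) ^ i else 0)

/-- Structure constants of the action of `Q_{2n}` on `V = ℂ^{2n}`:
`aQmod n i j k` is the coefficient of `x_k` in `x_i · e_j`, given by
`(x_i, e_1) = x_{i+1}` (`2 ≤ i ≤ 2n-2`), `(x_1, e_i) = (-1)^i x_i`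
(`2 ≤ i ≤ 2n-1`), `(x_{2n+1-i}, e_i) = x_{2n}` (`2 ≤ i ≤ 2n-1`), and
`(x_1, e_{2n}) = -2 x_{2n}`. -/
noncomputable def aQmod (n i j k : ℕ) : ℂ :=
  (if j = 1 ∧ 2 ≤ i ∧ i ≤ 2 * n - 2 ∧ k = i + 1 then 1 else 0)
  + (if i = 1 ∧ 2 ≤ j ∧ j ≤ 2 * n - 1 ∧ k = j then (-1 : ℂ) ^ j else 0)
  + (if 2 ≤ j ∧ j ≤ 2 * n - 1 ∧ i = 2 * n + 1 - j ∧ k = 2 * n then 1 else 0)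
  + (if i = 1 ∧ j = 2 * n ∧ k = 2 * n then (-2 : ℂ) else 0)

lemma aN_zero (n : ℕ) (hn : 2 ≤ n) (q k : ℕ) : aQmod n (2*n) q k = 0 := by
  unfold aQmod; split_ifs <;> first | omega | norm_num

lemma a_last (n : ℕ) (hn : 2 ≤ n) (i k : ℕ) :
    aQmod n i (2*n) k = if i = 1 ∧ k = 2*n then -2 else 0 := by
  unfold aQmod; split_ifs <;> first | omega | norm_num

lemma sum_if_eq (N t : ℕ) (ht : t < N) (c : ℕ → Prop) [DecidablePred c]
    (hc : ∀ m, c m ↔ m = t) (v : ℂ) (g : ℕ → ℂ) :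
    ∑ m ∈ Finset.range N, (if c m then v else 0) * g m = v * g t := by
  rw [Finset.sum_eq_single t]
  · rw [if_pos ((hc t).mpr rfl)]
  · intro b _ hb; rw [if_neg (fun h => hb ((hc b).mp h)), zero_mul]
  · intro h; exact absurd (Finset.mem_range.mpr ht) h

lemma sum_if_zero (N : ℕ) (c : ℕ → Prop) [DecidablePred c] (hc : ∀ m, ¬ c m)
    (v : ℂ) (g : ℕ → ℂ) :
    ∑ m ∈ Finset.range N, (if c m then v else 0) * g m = 0 :=
  Finset.sum_eq_zero fun m _ => by rw [if_neg (hc m), zero_mul]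

lemma collapse (N t : ℕ) (P : Prop) [Decidable P] (hP : P → t < N)
    (c : ℕ → Prop) [DecidablePred c] (hc : ∀ m, c m ↔ (P ∧ m = t)) (v : ℂ) (g : ℕ → ℂ) :
    ∑ m ∈ Finset.range N, (if c m then v else 0) * g m = if P then v * g t else 0 := by
  by_cases hp : P
  · rw [if_pos hp]
    exact sum_if_eq N t (hP hp) c (fun m => by rw [hc]; simp [hp]) v g
  · rw [if_neg hp]
    exact sum_if_zero N c (fun m hm => hp ((hc m).mp hm).1) v g

lemma S2 (n : ℕ) (hn : 2 ≤ n) (i p q k : ℕ) :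
    ∑ m ∈ Finset.range (2*n), aQmod n i p (m+1) * aQmod n (m+1) q k
    = (if p = 1 ∧ 2 ≤ i ∧ i ≤ 2*n-2 then aQmod n (i+1) q k else 0)
    + (if i = 1 ∧ 2 ≤ p ∧ p ≤ 2*n-1 then (-1:ℂ)^p * aQmod n p q k else 0) := by
  have h1 := collapse (2*n) i (p = 1 ∧ 2 ≤ i ∧ i ≤ 2*n-2) (by omega)
    (fun m => p = 1 ∧ 2 ≤ i ∧ i ≤ 2*n-2 ∧ m+1 = i+1) (fun m => by omega) 1
    (fun m => aQmod n (m+1) q k)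
  have h2 := collapse (2*n) (p-1) (i = 1 ∧ 2 ≤ p ∧ p ≤ 2*n-1) (by omega)
    (fun m => i = 1 ∧ 2 ≤ p ∧ p ≤ 2*n-1 ∧ m+1 = p) (fun m => by omega) ((-1:ℂ)^p)
    (fun m => aQmod n (m+1) q k)
  have h3 := collapse (2*n) (2*n-1) (2 ≤ p ∧ p ≤ 2*n-1 ∧ i = 2*n+1-p) (by omega)
    (fun m => 2 ≤ p ∧ p ≤ 2*n-1 ∧ i = 2*n+1-p ∧ m+1 = 2*n) (fun m => by omega) 1
    (fun m => aQmod n (m+1) q k)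
  have h4 := collapse (2*n) (2*n-1) (i = 1 ∧ p = 2*n) (by omega)
    (fun m => i = 1 ∧ p = 2*n ∧ m+1 = 2*n) (fun m => by omega) (-2:ℂ)
    (fun m => aQmod n (m+1) q k)
  have hN : 2*n-1+1 = 2*n := by omega
  have hp1 : p-1+1 = p ∨ p = 0 := by omega
  calc ∑ m ∈ Finset.range (2*n), aQmod n i p (m+1) * aQmod n (m+1) q k
      = ∑ m ∈ Finset.range (2*n),
        ((if p = 1 ∧ 2 ≤ i ∧ i ≤ 2*n-2 ∧ m+1 = i+1 then (1:ℂ) else 0) * aQmod n (m+1) q k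
        + (if i = 1 ∧ 2 ≤ p ∧ p ≤ 2*n-1 ∧ m+1 = p then (-1:ℂ)^p else 0) * aQmod n (m+1) q k
        + (if 2 ≤ p ∧ p ≤ 2*n-1 ∧ i = 2*n+1-p ∧ m+1 = 2*n then (1:ℂ) else 0) * aQmod n (m+1) q k
        + (if i = 1 ∧ p = 2*n ∧ m+1 = 2*n then (-2:ℂ) else 0) * aQmod n (m+1) q k) :=
        Finset.sum_congr rfl (fun m _ => by rw [aQmod]; ring)
    _ = (if p = 1 ∧ 2 ≤ i ∧ i ≤ 2*n-2 then (1:ℂ) * aQmod n (i+1) q k else 0)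
        + (if i = 1 ∧ 2 ≤ p ∧ p ≤ 2*n-1 then (-1:ℂ)^p * aQmod n (p-1+1) q k else 0)
        + (if 2 ≤ p ∧ p ≤ 2*n-1 ∧ i = 2*n+1-p then (1:ℂ) * aQmod n (2*n-1+1) q k else 0)
        + (if i = 1 ∧ p = 2*n then (-2:ℂ) * aQmod n (2*n-1+1) q k else 0) := by
        rw [Finset.sum_add_distrib, Finset.sum_add_distrib, Finset.sum_add_distrib,
          h1, h2, h3, h4]
    _ = _ := by
        rw [hN, aN_zero n hn q k]
        rcases hp1 with hp | hp
        · rw [hp]; simp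
        · subst hp; simp

lemma S1 (n : ℕ) (hn : 2 ≤ n) (i p q k : ℕ) :
    ∑ j ∈ Finset.range (2*n), cQ n p q (j+1) * aQmod n i (j+1) k
    = (if p = 1 ∧ 2 ≤ q ∧ q ≤ 2*n-2 then aQmod n i (q+1) k else 0)
    - (if q = 1 ∧ 2 ≤ p ∧ p ≤ 2*n-2 then aQmod n i (p+1) k else 0)
    + (if 2 ≤ q ∧ q ≤ n ∧ p = 2*n+1-q then (-1:ℂ)^q * aQmod n i (2*n) k else 0)
    - (if 2 ≤ p ∧ p ≤ n ∧ q = 2*n+1-p then (-1:ℂ)^p * aQmod n i (2*n) k else 0) := by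
  have h1 := collapse (2*n) q (p = 1 ∧ 2 ≤ q ∧ q ≤ 2*n-2) (by omega)
    (fun j => p = 1 ∧ 2 ≤ q ∧ q ≤ 2*n-2 ∧ j+1 = q+1) (fun j => by omega) 1
    (fun j => aQmod n i (j+1) k)
  have h2 := collapse (2*n) p (q = 1 ∧ 2 ≤ p ∧ p ≤ 2*n-2) (by omega)
    (fun j => q = 1 ∧ 2 ≤ p ∧ p ≤ 2*n-2 ∧ j+1 = p+1) (fun j => by omega) 1
    (fun j => aQmod n i (j+1) k)
  have h3 := collapse (2*n) (2*n-1) (2 ≤ q ∧ q ≤ n ∧ p = 2*n+1-q) (by omega)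
    (fun j => 2 ≤ q ∧ q ≤ n ∧ p = 2*n+1-q ∧ j+1 = 2*n) (fun j => by omega) ((-1:ℂ)^q)
    (fun j => aQmod n i (j+1) k)
  have h4 := collapse (2*n) (2*n-1) (2 ≤ p ∧ p ≤ n ∧ q = 2*n+1-p) (by omega)
    (fun j => 2 ≤ p ∧ p ≤ n ∧ q = 2*n+1-p ∧ j+1 = 2*n) (fun j => by omega) ((-1:ℂ)^p)
    (fun j => aQmod n i (j+1) k)
  have hN : 2*n-1+1 = 2*n := by omega
  calc ∑ j ∈ Finset.range (2*n), cQ n p q (j+1) * aQmod n i (j+1) k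
      = ∑ j ∈ Finset.range (2*n),
        ((if p = 1 ∧ 2 ≤ q ∧ q ≤ 2*n-2 ∧ j+1 = q+1 then (1:ℂ) else 0) * aQmod n i (j+1) k
        - (if q = 1 ∧ 2 ≤ p ∧ p ≤ 2*n-2 ∧ j+1 = p+1 then (1:ℂ) else 0) * aQmod n i (j+1) k
        + (if 2 ≤ q ∧ q ≤ n ∧ p = 2*n+1-q ∧ j+1 = 2*n then (-1:ℂ)^q else 0) * aQmod n i (j+1) k
        - (if 2 ≤ p ∧ p ≤ n ∧ q = 2*n+1-p ∧ j+1 = 2*n then (-1:ℂ)^p else 0) * aQmod n i (j+1) k) :=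
        Finset.sum_congr rfl (fun j _ => by rw [cQ]; ring)
    _ = (if p = 1 ∧ 2 ≤ q ∧ q ≤ 2*n-2 then (1:ℂ) * aQmod n i (q+1) k else 0)
        - (if q = 1 ∧ 2 ≤ p ∧ p ≤ 2*n-2 then (1:ℂ) * aQmod n i (p+1) k else 0)
        + (if 2 ≤ q ∧ q ≤ n ∧ p = 2*n+1-q then (-1:ℂ)^q * aQmod n i (2*n-1+1) k else 0)
        - (if 2 ≤ p ∧ p ≤ n ∧ q = 2*n+1-p then (-1:ℂ)^p * aQmod n i (2*n-1+1) k else 0) := by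
        rw [Finset.sum_sub_distrib, Finset.sum_add_distrib, Finset.sum_sub_distrib,
          h1, h2, h3, h4]
    _ = _ := by rw [hN]; simp

lemma npow_parity (a b : ℕ) (h : Odd (a + b)) : (-1:ℂ)^a = -(-1:ℂ)^b := by
  have h1 : (-1:ℂ)^(a+b) = -1 := h.neg_one_pow
  rw [pow_add] at h1
  have h2 : (-1:ℂ)^b * (-1:ℂ)^b = 1 := by
    rw [← pow_add]; exact Even.neg_one_pow ⟨b, rfl⟩
  calc (-1:ℂ)^a = (-1:ℂ)^a * ((-1:ℂ)^b * (-1:ℂ)^b) := by rw [h2, mul_one]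
  _ = ((-1:ℂ)^a*(-1:ℂ)^b)*(-1:ℂ)^b := by ring
  _ = -(-1:ℂ)^b := by rw [h1]; ring

lemma L1 (n : ℕ) (hn : 2 ≤ n) (i q k : ℕ) (h2q : 2 ≤ q) (hq2 : q ≤ 2*n) :
    aQmod n i (q+1) k
    = (if i = 1 ∧ q ≤ 2*n-2 ∧ k = q+1 then (-1:ℂ)^(q+1) else 0)
    + (if q ≤ 2*n-2 ∧ i = 2*n-q ∧ k = 2*n then 1 else 0)
    + (if i = 1 ∧ q = 2*n-1 ∧ k = 2*n then -2 else 0) := by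
  unfold aQmod; split_ifs <;> first | omega | norm_num

lemma L2 (n : ℕ) (hn : 2 ≤ n) (i q k : ℕ) (hi1 : 1 ≤ i) (h2q : 2 ≤ q) (hq2 : q ≤ 2*n) :
    aQmod n (i+1) q k = if q ≤ 2*n-1 ∧ i = 2*n-q ∧ k = 2*n then 1 else 0 := by
  unfold aQmod; split_ifs <;> first | omega | norm_num

lemma L3 (n : ℕ) (hn : 2 ≤ n) (q k : ℕ) (h2q : 2 ≤ q) :
    aQmod n q 1 k = if q ≤ 2*n-2 ∧ k = q+1 then 1 else 0 := by
  unfold aQmod; split_ifs <;> first | omega | norm_num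

lemma L4 (n : ℕ) (hn : 2 ≤ n) (p q k : ℕ) (h2p : 2 ≤ p) (h2q : 2 ≤ q) :
    aQmod n p q k = if q ≤ 2*n-1 ∧ p = 2*n+1-q ∧ k = 2*n then 1 else 0 := by
  unfold aQmod; split_ifs <;> first | omega | norm_num

lemma key1 (n : ℕ) (hn : 2 ≤ n) (i q k : ℕ) (hi1 : 1 ≤ i) (hi2 : i ≤ 2*n)
    (hq1 : 1 ≤ q) (hq2 : q ≤ 2*n) (hk1 : 1 ≤ k) (hk2 : k ≤ 2*n) :
    ∑ j ∈ Finset.range (2*n), cQ n 1 q (j+1) * aQmod n i (j+1) k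
    = (∑ m ∈ Finset.range (2*n), aQmod n i 1 (m+1) * aQmod n (m+1) q k)
    - ∑ m ∈ Finset.range (2*n), aQmod n i q (m+1) * aQmod n (m+1) 1 k := by
  rw [S1 n hn i 1 q k, S2 n hn i 1 q k, S2 n hn i q 1 k, a_last n hn i k]
  by_cases hq : q = 1
  · subst hq; norm_num
  · have h2q : 2 ≤ q := by omega
    rw [L1 n hn i q k h2q hq2, L2 n hn i q k hi1 h2q hq2, L3 n hn q k h2q,
      if_neg (show ¬(q = 1 ∧ 2 ≤ 1 ∧ (1:ℕ) ≤ 2*n-2) by omega),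
      if_neg (show ¬(2 ≤ q ∧ q ≤ n ∧ 1 = 2*n+1-q) by omega),
      if_neg (show ¬(2 ≤ 1 ∧ (1:ℕ) ≤ n ∧ q = 2*n+1-1) by omega),
      if_neg (show ¬(i = 1 ∧ 2 ≤ 1 ∧ (1:ℕ) ≤ 2*n-1) by omega),
      if_neg (show ¬(q = 1 ∧ 2 ≤ i ∧ i ≤ 2*n-2) by omega)]
    split_ifs <;> first | omega | (rw [pow_succ]; ring) | ring

lemma key2 (n : ℕ) (hn : 2 ≤ n) (i p q k : ℕ) (hi1 : 1 ≤ i) (hi2 : i ≤ 2*n)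
    (h2p : 2 ≤ p) (hp2 : p ≤ 2*n) (h2q : 2 ≤ q) (hq2 : q ≤ 2*n)
    (hk1 : 1 ≤ k) (hk2 : k ≤ 2*n) :
    ∑ j ∈ Finset.range (2*n), cQ n p q (j+1) * aQmod n i (j+1) k
    = (∑ m ∈ Finset.range (2*n), aQmod n i p (m+1) * aQmod n (m+1) q k)
    - ∑ m ∈ Finset.range (2*n), aQmod n i q (m+1) * aQmod n (m+1) p k := by
  rw [S1 n hn i p q k, S2 n hn i p q k, S2 n hn i q p k, a_last n hn i k,
    L4 n hn p q k h2p h2q, L4 n hn q p k h2q h2p,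
    if_neg (show ¬(p = 1 ∧ 2 ≤ q ∧ q ≤ 2*n-2) by omega),
    if_neg (show ¬(q = 1 ∧ 2 ≤ p ∧ p ≤ 2*n-2) by omega),
    if_neg (show ¬(p = 1 ∧ 2 ≤ i ∧ i ≤ 2*n-2) by omega),
    if_neg (show ¬(q = 1 ∧ 2 ≤ i ∧ i ≤ 2*n-2) by omega)]
  by_cases hpq : p + q = 2*n+1
  · have hparity : (-1:ℂ)^p = -(-1:ℂ)^q := npow_parity p q ⟨n, by omega⟩
    split_ifs <;> first | omega | (rw [hparity]; ring) | ring
  · split_ifs <;> first | omega | ring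

lemma cQ_antisym (n p q j : ℕ) : cQ n p q j = - cQ n q p j := by
  unfold cQ; ring

lemma key (n : ℕ) (hn : 2 ≤ n) (i p q k : ℕ) (hi1 : 1 ≤ i) (hi2 : i ≤ 2*n)
    (hp1 : 1 ≤ p) (hp2 : p ≤ 2*n) (hq1 : 1 ≤ q) (hq2 : q ≤ 2*n)
    (hk1 : 1 ≤ k) (hk2 : k ≤ 2*n) :
    ∑ j ∈ Finset.range (2*n), cQ n p q (j+1) * aQmod n i (j+1) k
    = (∑ m ∈ Finset.range (2*n), aQmod n i p (m+1) * aQmod n (m+1) q k)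
    - ∑ m ∈ Finset.range (2*n), aQmod n i q (m+1) * aQmod n (m+1) p k := by
  by_cases hp : p = 1
  · subst hp; exact key1 n hn i q k hi1 hi2 hq1 hq2 hk1 hk2
  · by_cases hq : q = 1
    · subst hq
      have h := key1 n hn i p k hi1 hi2 hp1 hp2 hk1 hk2
      have hanti : ∀ j, cQ n p 1 (j+1) * aQmod n i (j+1) k
          = -(cQ n 1 p (j+1) * aQmod n i (j+1) k) := fun j => by
        rw [cQ_antisym n p 1 (j+1)]; ring
      rw [Finset.sum_congr rfl (fun j _ => hanti j), Finset.sum_neg_distrib, h]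
      ring
    · exact key2 n hn i p q k hi1 hi2 (by omega) hp2 (by omega) hq2 hk1 hk2

lemma keyFin (n : ℕ) (hn : 2 ≤ n) (i p q k : Fin (2*n)) :
    ∑ j : Fin (2*n), cQ n ((p:ℕ)+1) ((q:ℕ)+1) ((j:ℕ)+1) * aQmod n ((i:ℕ)+1) ((j:ℕ)+1) ((k:ℕ)+1)
    = (∑ m : Fin (2*n), aQmod n ((i:ℕ)+1) ((p:ℕ)+1) ((m:ℕ)+1) * aQmod n ((m:ℕ)+1) ((q:ℕ)+1) ((k:ℕ)+1))
    - ∑ m : Fin (2*n), aQmod n ((i:ℕ)+1) ((q:ℕ)+1) ((m:ℕ)+1) * aQmod n ((m:ℕ)+1) ((p:ℕ)+1) ((k:ℕ)+1) := by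
  rw [Fin.sum_univ_eq_sum_range (fun j => cQ n ((p:ℕ)+1) ((q:ℕ)+1) (j+1) * aQmod n ((i:ℕ)+1) (j+1) ((k:ℕ)+1)),
    Fin.sum_univ_eq_sum_range (fun m => aQmod n ((i:ℕ)+1) ((p:ℕ)+1) (m+1) * aQmod n (m+1) ((q:ℕ)+1) ((k:ℕ)+1)),
    Fin.sum_univ_eq_sum_range (fun m => aQmod n ((i:ℕ)+1) ((q:ℕ)+1) (m+1) * aQmod n (m+1) ((p:ℕ)+1) ((k:ℕ)+1))]
  exact key n hn ((i:ℕ)+1) ((p:ℕ)+1) ((q:ℕ)+1) ((k:ℕ)+1)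
    (by omega) (by have := i.isLt; omega) (by omega) (by have := p.isLt; omega)
    (by omega) (by have := q.isLt; omega) (by omega) (by have := k.isLt; omega)

lemma T_L {N : ℕ} (G : Fin N → Fin N → Fin N → Fin N → ℂ) :
    ∑ a : Fin N, ∑ b, ∑ c, ∑ d, G a b c d = ∑ a, ∑ c, ∑ d, ∑ b, G a b c d :=
  Finset.sum_congr rfl fun a _ =>
    calc ∑ b : Fin N, ∑ c, ∑ d, G a b c d
        = ∑ c, ∑ b, ∑ d, G a b c d := Finset.sum_comm
      _ = ∑ c, ∑ d, ∑ b, G a b c d :=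
          Finset.sum_congr rfl fun c _ => Finset.sum_comm

lemma T_R1 {N : ℕ} (G : Fin N → Fin N → Fin N → Fin N → ℂ) :
    ∑ a : Fin N, ∑ b, ∑ c, ∑ d, G a b c d = ∑ c, ∑ d, ∑ b, ∑ a, G a b c d :=
  calc ∑ a : Fin N, ∑ b, ∑ c, ∑ d, G a b c d
      = ∑ a, ∑ c, ∑ b, ∑ d, G a b c d :=
        Finset.sum_congr rfl fun a _ => Finset.sum_comm
    _ = ∑ c, ∑ a, ∑ b, ∑ d, G a b c d := Finset.sum_comm
    _ = ∑ c, ∑ b, ∑ a, ∑ d, G a b c d :=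
        Finset.sum_congr rfl fun c _ => Finset.sum_comm
    _ = ∑ c, ∑ b, ∑ d, ∑ a, G a b c d :=
        Finset.sum_congr rfl fun c _ => Finset.sum_congr rfl fun b _ => Finset.sum_comm
    _ = ∑ c, ∑ d, ∑ b, ∑ a, G a b c d :=
        Finset.sum_congr rfl fun c _ => Finset.sum_comm

lemma T_R2 {N : ℕ} (G : Fin N → Fin N → Fin N → Fin N → ℂ) :
    ∑ a : Fin N, ∑ b, ∑ c, ∑ d, G a b c d = ∑ c, ∑ b, ∑ d, ∑ a, G a b c d :=
  calc ∑ a : Fin N, ∑ b, ∑ c, ∑ d, G a b c d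
      = ∑ a, ∑ c, ∑ b, ∑ d, G a b c d :=
        Finset.sum_congr rfl fun a _ => Finset.sum_comm
    _ = ∑ c, ∑ a, ∑ b, ∑ d, G a b c d := Finset.sum_comm
    _ = ∑ c, ∑ b, ∑ a, ∑ d, G a b c d :=
        Finset.sum_congr rfl fun c _ => Finset.sum_comm
    _ = ∑ c, ∑ b, ∑ d, ∑ a, G a b c d :=
        Finset.sum_congr rfl fun c _ => Finset.sum_congr rfl fun b _ => Finset.sum_comm


/-- The stated action makes `V = ℂ^{2n}` a right `Q_{2n}`-module:
`v·[e,f] = (v·e)·f - (v·f)·e` for all `v ∈ V` and `e, f ∈ Q_{2n}`. -/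
theorem Q2n_module_structure (n : ℕ) (hn : 2 ≤ n) :
    ∀ v e f : Fin (2 * n) → ℂ,
      bilinBracket (2 * n) (aQmod n) v (bilinBracket (2 * n) (cQ n) e f)
        = bilinBracket (2 * n) (aQmod n) (bilinBracket (2 * n) (aQmod n) v e) f
          - bilinBracket (2 * n) (aQmod n) (bilinBracket (2 * n) (aQmod n) v f) e := by
  intro v e f
  funext k
  simp only [bilinBracket, Pi.sub_apply]
  simp only [Finset.mul_sum, Finset.sum_mul]
  rw [T_L (fun a b c d => v a * (e c * f d * cQ n (↑c + 1) (↑d + 1) (↑b + 1))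
        * aQmod n (↑a + 1) (↑b + 1) (↑k + 1)),
    T_R1 (fun a b c d => v c * e d * aQmod n (↑c + 1) (↑d + 1) (↑a + 1) * f b
        * aQmod n (↑a + 1) (↑b + 1) (↑k + 1)),
    T_R2 (fun a b c d => v c * f d * aQmod n (↑c + 1) (↑d + 1) (↑a + 1) * e b
        * aQmod n (↑a + 1) (↑b + 1) (↑k + 1)),
    ← Finset.sum_sub_distrib]
  refine Finset.sum_congr rfl fun i _ => ?_
  rw [← Finset.sum_sub_distrib]
  refine Finset.sum_congr rfl fun p _ => ?_
  rw [← Finset.sum_sub_distrib]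
  refine Finset.sum_congr rfl fun q _ => ?_
  calc ∑ j : Fin (2*n), v i * (e p * f q * cQ n (↑p + 1) (↑q + 1) (↑j + 1))
          * aQmod n (↑i + 1) (↑j + 1) (↑k + 1)
      = v i * e p * f q * ∑ j : Fin (2*n),
          cQ n (↑p + 1) (↑q + 1) (↑j + 1) * aQmod n (↑i + 1) (↑j + 1) (↑k + 1) := by
        rw [Finset.mul_sum]; exact Finset.sum_congr rfl fun j _ => by ring
    _ = v i * e p * f q *
        ((∑ m : Fin (2*n), aQmod n (↑i + 1) (↑p + 1) (↑m + 1) * aQmod n (↑m + 1) (↑q + 1) (↑k + 1))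
        - ∑ m : Fin (2*n), aQmod n (↑i + 1) (↑q + 1) (↑m + 1) * aQmod n (↑m + 1) (↑p + 1) (↑k + 1)) := by
        rw [keyFin n hn i p q k]
    _ = (∑ m : Fin (2*n), v i * e p * aQmod n (↑i + 1) (↑p + 1) (↑m + 1) * f q
          * aQmod n (↑m + 1) (↑q + 1) (↑k + 1))
        - ∑ m : Fin (2*n), v i * f q * aQmod n (↑i + 1) (↑q + 1) (↑m + 1) * e p
          * aQmod n (↑m + 1) (↑p + 1) (↑k + 1) := by
        rw [mul_sub, Finset.mul_sum, Finset.mul_sum]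
        congr 1 <;> exact Finset.sum_congr rfl fun m _ => by ring
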